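/- Let X be a complete normed real vector space, let B : X → X be a γ-contraction with γ ∈ (0,1) and fixed point Q*, and let M > 0, ε > 0 be given. Then there exist L ∈ ℕ and ε₁ > 0 (one may take ε₁ = ε(1 − γ)/2) such that for every sequence (Q̂_l) in X with ‖Q̂_0 − Q*‖ ≤ M and ‖Q̂_{l+1} − B(Q̂_l)‖ ≤ ε₁ for all l < L, one has ‖Q̂_L − Q*‖ < ε. -/

import Mathlib

/-!
If each step of the iteration misses `B` by at most `c`, the error `eₙ = dist Qₙ Q*` obeys
`eₙ₊₁ ≤ c + γ eₙ`, hence `e_L ≤ γ^L e₀ + c / (1 - γ)`. The first term is the truncation error of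
exact value iteration and falls below `ε / 2` once `L` is large; the second equals `ε / 2` for
`c = ε (1 - γ) / 2`.
-/

theorem le_pow_mul_add_div_one_sub_of_le_add_mul {e : ℕ → ℝ} {γ c : ℝ} (hγ0 : 0 ≤ γ)
    (hγ1 : γ < 1) (hc : 0 ≤ c) {L : ℕ} (h : ∀ n < L, e (n + 1) ≤ c + γ * e n) :
    e L ≤ γ ^ L * e 0 + c / (1 - γ) := by
  induction L with
  | zero => simpa using div_nonneg hc (by linarith : (0 : ℝ) ≤ 1 - γ)
  | succ n ih =>
    have hn : e n ≤ γ ^ n * e 0 + c / (1 - γ) := ih fun k hk => h k (by omega)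
    have hγ : 1 - γ ≠ 0 := by linarith
    calc e (n + 1) ≤ c + γ * (γ ^ n * e 0 + c / (1 - γ)) := by
          grw [h n n.lt_succ_self, hn]
      _ = γ ^ (n + 1) * e 0 + c / (1 - γ) := by field_simp; ring

theorem dist_le_pow_mul_add_div_one_sub {α : Type*} [PseudoMetricSpace α] {B : α → α} {γ c : ℝ}
    (hγ0 : 0 ≤ γ) (hγ1 : γ < 1) (hc : 0 ≤ c) (hB : ∀ x y, dist (B x) (B y) ≤ γ * dist x y) {q : α}
    (hq : B q = q) {Q : ℕ → α} {L : ℕ} (hstep : ∀ l < L, dist (Q (l + 1)) (B (Q l)) ≤ c) :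
    dist (Q L) q ≤ γ ^ L * dist (Q 0) q + c / (1 - γ) := by
  refine le_pow_mul_add_div_one_sub_of_le_add_mul (e := fun n => dist (Q n) q) hγ0 hγ1 hc ?_
  intro l hl
  calc dist (Q (l + 1)) q ≤ dist (Q (l + 1)) (B (Q l)) + dist (B (Q l)) (B q) := by
        rw [hq]; exact dist_triangle _ _ _
    _ ≤ c + γ * dist (Q l) q := add_le_add (hstep l hl) (hB _ _)

theorem depth_and_accuracy_selection_general
    {X : Type*} [NormedAddCommGroup X]
    (B : X → X) (γ : ℝ) (hγ0 : 0 < γ) (hγ1 : γ < 1)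
    (hB : ∀ x y : X, ‖B x - B y‖ ≤ γ * ‖x - y‖)
    (Qstar : X) (hfix : B Qstar = Qstar)
    (M ε : ℝ) (hM : 0 < M) (hε : 0 < ε) :
    ∃ (L : ℕ) (ε₁ : ℝ), 0 < ε₁ ∧ ε₁ = ε * (1 - γ) / 2 ∧
      ∀ Qhat : ℕ → X, ‖Qhat 0 - Qstar‖ ≤ M →
        (∀ l < L, ‖Qhat (l + 1) - B (Qhat l)‖ ≤ ε₁) →
        ‖Qhat L - Qstar‖ < ε := by
  have h1γ : 0 < 1 - γ := by linarith
  obtain ⟨L, hL⟩ : ∃ L : ℕ, γ ^ L < ε / 2 / M := exists_pow_lt_of_lt_one (by positivity) hγ1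
  refine ⟨L, ε * (1 - γ) / 2, by positivity, rfl, fun Qhat h0 hstep => ?_⟩
  simp only [← dist_eq_norm] at hB h0 hstep ⊢
  have htrunc : γ ^ L * dist (Qhat 0) Qstar < ε / 2 :=
    calc γ ^ L * dist (Qhat 0) Qstar ≤ γ ^ L * M := by gcongr
      _ < ε / 2 := (lt_div_iff₀ hM).mp hL
  have hacc : ε * (1 - γ) / 2 / (1 - γ) = ε / 2 := by field_simp
  have hbound := dist_le_pow_mul_add_div_one_sub hγ0.le hγ1 (by positivity) hB hfix hstep
  linarith

/-- Quantitative UAT skeleton: for a `γ`-contraction `B` with fixed point `Q*`,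
given an a priori bound `M` on the initial error and a target accuracy `ε`, there is a depth `L`
and a per-layer accuracy `ε₁` (one may take `ε₁ = ε (1 - γ) / 2`) such that every perturbed
value-iteration sequence with per-step error at most `ε₁` satisfies `‖Q̂_L - Q*‖ < ε`. -/
theorem depth_and_accuracy_selection
    {X : Type*} [NormedAddCommGroup X] [NormedSpace ℝ X] [CompleteSpace X]
    (B : X → X) (γ : ℝ) (hγ0 : 0 < γ) (hγ1 : γ < 1)
    (hB : ∀ x y : X, ‖B x - B y‖ ≤ γ * ‖x - y‖)
    (Qstar : X) (hfix : B Qstar = Qstar)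
    (M ε : ℝ) (hM : 0 < M) (hε : 0 < ε) :
    ∃ (L : ℕ) (ε₁ : ℝ), 0 < ε₁ ∧ ε₁ = ε * (1 - γ) / 2 ∧
      ∀ Qhat : ℕ → X, ‖Qhat 0 - Qstar‖ ≤ M →
        (∀ l < L, ‖Qhat (l + 1) - B (Qhat l)‖ ≤ ε₁) →
        ‖Qhat L - Qstar‖ < ε :=
  depth_and_accuracy_selection_general B γ hγ0 hγ1 hB Qstar hfix M ε hM hε
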